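/- arXiv:2505.15639 — 4 statements merged into one kernel-verified Lean document; each statement's English description precedes it below -/
import Mathlib

section
/- For r > 0 and λ > 0, define u^λ(0) = ∫₀^∞ e^{-λt}[2 e^{-rt} g(t,0) + ∫₀^t 2r e^{-rs} g(s,0) ds] dt, where g(t,z) = e^{-z²/(4t)}/√(4πt). Then u^λ(0) = √(λ+r)/λ, and hence 1/u^λ(0) = λ/√(λ+r). -/
/-!
The bracket splits into `2 e^{-rt} g(t,0)` and the antiderivative of `f(s) = 2r e^{-rs} g(s,0)`.
Since `∫₀^∞ e^{-μt} t^{-1/2} dt = √(π/μ)`, the Laplace transform of `e^{-rt} g(t,0)` at `λ` is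
`1/(2√(λ+r))`, so the first term contributes `1/√(λ+r)`. By Fubini on `{0 < s ≤ t}`, the
Laplace transform of an antiderivative of `f` is `λ⁻¹` times that of `f`, so the second term
contributes `r/(λ√(λ+r))`. The sum is `√(λ+r)/λ`.
-/

open MeasureTheory Real Set

theorem integral_exp_neg_mul_div_sqrt {μ : ℝ} (hμ : 0 < μ) :
    ∫ t in Ioi (0 : ℝ), exp (-μ * t) / √t = √(π / μ) := by
  have hrpow : ∀ t ∈ Ioi (0 : ℝ),
      exp (-μ * t) / √t = t ^ ((1 / 2 : ℝ) - 1) * exp (-(μ * t)) := by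
    intro t ht
    rw [show (1 / 2 : ℝ) - 1 = -(1 / 2) by norm_num, rpow_neg ht.le, ← sqrt_eq_rpow,
      neg_mul, div_eq_inv_mul]
  rw [setIntegral_congr_fun measurableSet_Ioi hrpow,
    integral_rpow_mul_exp_neg_mul_Ioi (by norm_num) hμ, Gamma_one_half_eq, ← sqrt_eq_rpow,
    sqrt_div' _ hμ.le, sqrt_div' _ hμ.le, sqrt_one]
  ring

theorem integral_exp_neg_mul_mul_one_div_sqrt_four_pi_mul {μ : ℝ} (hμ : 0 < μ) :
    ∫ t in Ioi (0 : ℝ), exp (-μ * t) * (1 / √(4 * π * t)) = 1 / (2 * √μ) := by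
  have hsplit : ∀ t ∈ Ioi (0 : ℝ),
      exp (-μ * t) * (1 / √(4 * π * t)) = (2 * √π)⁻¹ * (exp (-μ * t) / √t) := by
    intro t _
    rw [sqrt_mul (by positivity), sqrt_mul zero_le_four, show (4 : ℝ) = 2 ^ 2 by norm_num,
      sqrt_sq zero_le_two]
    ring
  rw [setIntegral_congr_fun measurableSet_Ioi hsplit, integral_const_mul,
    integral_exp_neg_mul_div_sqrt hμ, sqrt_div' _ hμ.le]
  have : √π ≠ 0 := by positivity
  field_simp

theorem integrableOn_exp_neg_mul_mul_one_div_sqrt_four_pi_mul {μ : ℝ} (hμ : 0 < μ) :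
    IntegrableOn (fun t => exp (-μ * t) * (1 / √(4 * π * t))) (Ioi 0) :=
  Integrable.of_integral_ne_zero <| by
    rw [integral_exp_neg_mul_mul_one_div_sqrt_four_pi_mul hμ]; positivity

section LaplaceAntiderivative

variable {E : Type*} [NormedAddCommGroup E] [NormedSpace ℝ E] {f : ℝ → E} {l : ℝ}

noncomputable def laplaceAntiderivativeKernel (l : ℝ) (f : ℝ → E) : ℝ × ℝ → E :=
  {p : ℝ × ℝ | p.2 ≤ p.1}.indicator fun p => exp (-l * p.1) • f p.2

theorem integrable_laplaceAntiderivativeKernel (hf : IntegrableOn f (Ioi 0)) (hl : 0 < l) :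
    Integrable (laplaceAntiderivativeKernel l f)
      ((volume.restrict (Ioi 0)).prod (volume.restrict (Ioi 0))) :=
  ((exp_neg_integrableOn_Ioi 0 hl).smul_prod hf).indicator
    (measurableSet_le measurable_snd measurable_fst)

theorem integral_laplaceAntiderivativeKernel_right (l t : ℝ) :
    ∫ s in Ioi 0, laplaceAntiderivativeKernel l f (t, s)
      = exp (-l * t) • ∫ s in Ioc 0 t, f s := by
  have hsection : (fun s => laplaceAntiderivativeKernel l f (t, s))
      = (Iic t).indicator fun s => exp (-l * t) • f s := by
    ext s
    by_cases h : s ≤ t <;> simp [laplaceAntiderivativeKernel, indicator, h]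
  rw [hsection, integral_indicator measurableSet_Iic, Measure.restrict_restrict measurableSet_Iic,
    inter_comm, Ioi_inter_Iic, integral_smul]

theorem integral_laplaceAntiderivativeKernel_left [CompleteSpace E] (hl : 0 < l) {s : ℝ}
    (hs : 0 < s) :
    ∫ t in Ioi 0, laplaceAntiderivativeKernel l f (t, s) = l⁻¹ • exp (-l * s) • f s := by
  have hsection : (fun t => laplaceAntiderivativeKernel l f (t, s))
      = (Ici s).indicator fun t => exp (-l * t) • f s := by
    ext t
    by_cases h : s ≤ t <;> simp [laplaceAntiderivativeKernel, indicator, h]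
  rw [hsection, integral_indicator measurableSet_Ici, Measure.restrict_restrict measurableSet_Ici,
    inter_eq_left.mpr (Ici_subset_Ioi.mpr hs), integral_Ici_eq_integral_Ioi,
    integral_smul_const, integral_exp_mul_Ioi (neg_lt_zero.mpr hl), smul_smul]
  congr 1
  field_simp

theorem integrableOn_exp_neg_mul_smul_integral_Ioc (hf : IntegrableOn f (Ioi 0)) (hl : 0 < l) :
    IntegrableOn (fun t => exp (-l * t) • ∫ s in Ioc 0 t, f s) (Ioi 0) := by
  have h := (integrable_laplaceAntiderivativeKernel hf hl).integral_prod_left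
  simp only [integral_laplaceAntiderivativeKernel_right] at h
  exact h

theorem integral_exp_neg_mul_smul_integral_Ioc [CompleteSpace E] (hf : IntegrableOn f (Ioi 0))
    (hl : 0 < l) :
    ∫ t in Ioi 0, exp (-l * t) • ∫ s in Ioc 0 t, f s
      = l⁻¹ • ∫ s in Ioi 0, exp (-l * s) • f s := by
  simp_rw [← integral_laplaceAntiderivativeKernel_right]
  rw [integral_integral_swap (f := fun t s => laplaceAntiderivativeKernel l f (t, s))
    (integrable_laplaceAntiderivativeKernel hf hl), ← integral_smul]
  exact setIntegral_congr_fun measurableSet_Ioi fun s hs =>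
    integral_laplaceAntiderivativeKernel_left hl hs

end LaplaceAntiderivative

theorem resolvent_density_at_zero (r l : ℝ) (hr : 0 < r) (hl : 0 < l) :
    (∫ t in Ioi (0:ℝ), Real.exp (-l * t) *
        (2 * Real.exp (-r * t) * (1 / Real.sqrt (4 * Real.pi * t))
          + ∫ s in Ioc (0:ℝ) t, 2 * r * Real.exp (-r * s) * (1 / Real.sqrt (4 * Real.pi * s))))
      = Real.sqrt (l + r) / l
    ∧ (Real.sqrt (l + r) / l)⁻¹ = l / Real.sqrt (l + r) := by
  refine ⟨?_, inv_div _ _⟩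
  set g : ℝ → ℝ := fun t => 1 / √(4 * π * t)
  have hlr : 0 < l + r := by linarith
  have hshift (c t : ℝ) :
      exp (-l * t) * (c * exp (-r * t) * g t) = c * (exp (-(l + r) * t) * g t) := by
    rw [neg_add, add_mul, exp_add]; ring
  have hf : IntegrableOn (fun s => 2 * r * exp (-r * s) * g s) (Ioi 0) :=
    IntegrableOn.congr_fun
      ((integrableOn_exp_neg_mul_mul_one_div_sqrt_four_pi_mul hr).const_mul (2 * r))
      (fun s _ => by simp only [g]; ring) measurableSet_Ioi
  have hno_reset : ∫ t in Ioi 0, exp (-l * t) * (2 * exp (-r * t) * g t) = 1 / √(l + r) := by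
    simp_rw [hshift]
    rw [integral_const_mul, integral_exp_neg_mul_mul_one_div_sqrt_four_pi_mul hlr]
    field_simp
  have hreset : ∫ t in Ioi 0, exp (-l * t) * ∫ s in Ioc 0 t, 2 * r * exp (-r * s) * g s
      = r / (l * √(l + r)) := by
    have h := integral_exp_neg_mul_smul_integral_Ioc hf hl
    simp only [smul_eq_mul, hshift] at h
    rw [h, integral_const_mul, integral_exp_neg_mul_mul_one_div_sqrt_four_pi_mul hlr]
    field_simp
  have hint_no_reset : IntegrableOn (fun t => exp (-l * t) * (2 * exp (-r * t) * g t)) (Ioi 0) :=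
    Integrable.of_integral_ne_zero (by rw [hno_reset]; positivity)
  have hint_reset := integrableOn_exp_neg_mul_smul_integral_Ioc hf hl
  simp only [smul_eq_mul] at hint_reset
  simp_rw [mul_add]
  rw [integral_add hint_no_reset hint_reset, hno_reset, hreset]
  field_simp
  linarith [sq_sqrt hlr.le]
end

section
/- The function Φ(λ) = λ/√(λ+r), for fixed r ≥ 0, is a Bernstein function on (0,∞): Φ ≥ 0, Φ' ≥ 0, and (−1)^{n−1} Φ^{(n)}(λ) ≥ 0 for all n ≥ 1 and λ > 0. In particular Φ'' ≤ 0 on (0,∞). -/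
open Real Set

/-! On `(-r, ∞)` we have `x / √(x + r) = (x + r) ^ (1/2) - r (x + r) ^ (-1/2)`, and the `n`-th
derivative of `(x + r) ^ p` is the falling factorial `p (p - 1) ⋯ (p - n + 1)` times
`(x + r) ^ (p - n)`. For `n ≥ 1` the falling factorial has sign `(-1) ^ (n - 1)` at `p = 1/2` and
`(-1) ^ n` at `p = -1/2`, so with `r ≥ 0` both terms of `(-1) ^ (n - 1) Φ⁽ⁿ⁾` are nonnegative. -/

lemma iteratedDeriv_rpow_comp_add_const (p r x : ℝ) (n : ℕ) :
    iteratedDeriv n (fun x => (x + r) ^ p) x = (descPochhammer ℝ n).eval p * (x + r) ^ (p - n) := by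
  rw [iteratedDeriv_comp_add_const n (fun x => x ^ p) r, iteratedDeriv_eq_iterate]
  exact iter_deriv_rpow_const p (x + r) n

lemma div_sqrt_add_eq_rpow_sub {r x : ℝ} (hx : 0 < x + r) :
    x / √(x + r) = (x + r) ^ (1 / 2 : ℝ) - r * (x + r) ^ (-(1 / 2) : ℝ) := by
  rw [rpow_neg hx.le, ← sqrt_eq_rpow]
  field_simp
  rw [sq_sqrt hx.le]
  ring

lemma contDiffAt_rpow_comp_add_const {p r x : ℝ} (hx : x + r ≠ 0) (n : ℕ) :
    ContDiffAt ℝ n (fun x => (x + r) ^ p) x :=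
  (contDiffAt_rpow_const (Or.inl hx)).comp x (contDiffAt_id.add contDiffAt_const)

lemma iteratedDeriv_div_sqrt_add {r x : ℝ} (hx : 0 < x + r) (n : ℕ) :
    iteratedDeriv n (fun x => x / √(x + r)) x =
      (descPochhammer ℝ n).eval (1 / 2) * (x + r) ^ (1 / 2 - n : ℝ)
        - r * ((descPochhammer ℝ n).eval (-(1 / 2)) * (x + r) ^ (-(1 / 2) - n : ℝ)) := by
  have hnhds : ∀ᶠ y in nhds x, 0 < y + r :=
    (continuous_add_const r).continuousAt.eventually (lt_mem_nhds hx)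
  rw [Filter.EventuallyEq.iteratedDeriv_eq n
      (hnhds.mono fun y hy => div_sqrt_add_eq_rpow_sub hy),
    iteratedDeriv_fun_sub (contDiffAt_rpow_comp_add_const hx.ne' n)
      (contDiffAt_const.mul (contDiffAt_rpow_comp_add_const hx.ne' n)),
    iteratedDeriv_const_mul_field, iteratedDeriv_rpow_comp_add_const,
    iteratedDeriv_rpow_comp_add_const]

lemma neg_one_pow_mul_descPochhammer_eval_neg_pos {q : ℝ} (hq : 0 < q) (n : ℕ) :
    0 < (-1) ^ n * (descPochhammer ℝ n).eval (-q) := by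
  rw [← ascPochhammer_eval_neg_eq_descPochhammer, neg_neg]
  exact ascPochhammer_pos n q hq

lemma neg_one_pow_mul_descPochhammer_succ_eval_pos {p : ℝ} (hp₀ : 0 < p) (hp₁ : p < 1) (n : ℕ) :
    0 < (-1) ^ n * (descPochhammer ℝ (n + 1)).eval p := by
  have h := neg_one_pow_mul_descPochhammer_eval_neg_pos (sub_pos.2 hp₁) n
  rw [neg_sub] at h
  rw [descPochhammer_succ_left, Polynomial.eval_mul, Polynomial.eval_comp, Polynomial.eval_X,
    Polynomial.eval_sub, Polynomial.eval_X, Polynomial.eval_one, mul_left_comm]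
  exact mul_pos hp₀ h

theorem Phi_is_Bernstein (r : ℝ) (hr : 0 ≤ r) :
    (∀ l > (0:ℝ), 0 ≤ l / Real.sqrt (l + r)) ∧
    (∀ l > (0:ℝ), 0 ≤ deriv (fun x => x / Real.sqrt (x + r)) l) ∧
    (∀ n : ℕ, 1 ≤ n → ∀ l > (0:ℝ),
      0 ≤ (-1 : ℝ) ^ (n - 1) * iteratedDeriv n (fun x => x / Real.sqrt (x + r)) l) ∧
    (∀ l > (0:ℝ), iteratedDeriv 2 (fun x => x / Real.sqrt (x + r)) l ≤ 0) := by
  have alternating : ∀ n : ℕ, 1 ≤ n → ∀ l > (0:ℝ),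
      0 ≤ (-1 : ℝ) ^ (n - 1) * iteratedDeriv n (fun x => x / Real.sqrt (x + r)) l := by
    rintro (_ | m) hm l hl
    · omega
    have hlr : 0 < l + r := by linarith
    have hpos := neg_one_pow_mul_descPochhammer_succ_eval_pos (p := 1 / 2)
      (by norm_num) (by norm_num) m
    have hneg := neg_one_pow_mul_descPochhammer_eval_neg_pos (q := 1 / 2) (by norm_num) (m + 1)
    rw [pow_succ] at hneg
    rw [iteratedDeriv_div_sqrt_add hlr, Nat.add_sub_cancel]
    have hA := rpow_pos_of_pos hlr (1 / 2 - (m + 1 : ℕ))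
    have hB := rpow_pos_of_pos hlr (-(1 / 2) - (m + 1 : ℕ))
    linarith [mul_pos hpos hA, mul_nonneg (mul_nonneg hr hneg.le) hB.le]
  refine ⟨fun l hl => div_nonneg hl.le (sqrt_nonneg _), fun l hl => ?_, alternating,
    fun l hl => ?_⟩
  · simpa using alternating 1 le_rfl l hl
  · simpa using alternating 2 (by norm_num) l hl
end

section
/- For r > 0 and λ > 0, Φ(λ) = λ/√(λ+r) has zero drift and Lévy measure Π^Φ(dz) = e^{-rz}(2rz+1)/(2√π z^{3/2}) dz, that is, ∫₀^∞ (1 − e^{-λz}) · e^{-rz}(2rz+1)/(2√π z^{3/2}) dz = λ/√(λ+r). -/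
open MeasureTheory Real Set

open Filter

lemma gamma_half_integrable {b : ℝ} (hb : 0 < b) :
    IntegrableOn (fun z : ℝ => Real.exp (-(b * z)) * z ^ (-(1:ℝ)/2)) (Ioi 0) := by
  have h := integrableOn_rpow_mul_exp_neg_mul_rpow (s := -(1:ℝ)/2) (p := 1) (b := b)
    (by norm_num) one_pos hb
  simp_rw [Real.rpow_one] at h
  exact h.congr_fun (fun x _ => by ring_nf) measurableSet_Ioi

lemma gamma_half_value {b : ℝ} (hb : 0 < b) :
    ∫ z in Ioi (0:ℝ), Real.exp (-(b * z)) * z ^ (-(1:ℝ)/2)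
      = Real.sqrt Real.pi / Real.sqrt b := by
  have h := Real.integral_rpow_mul_exp_neg_mul_Ioi (a := (1:ℝ)/2) (by norm_num) hb
  have h2 : ∫ z in Ioi (0:ℝ), Real.exp (-(b * z)) * z ^ (-(1:ℝ)/2)
      = ∫ t in Ioi (0:ℝ), t ^ ((1:ℝ)/2 - 1) * Real.exp (-(b * t)) := by
    refine setIntegral_congr_fun measurableSet_Ioi (fun x _ => ?_)
    norm_num [mul_comm]
  rw [h2, h, Real.Gamma_one_half_eq]
  rw [show (1:ℝ)/b = b⁻¹ by ring, ← Real.sqrt_eq_rpow, Real.sqrt_inv]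
  ring

set_option maxHeartbeats 1000000 in
theorem levy_measure_Phi (r l : ℝ) (hr : 0 < r) (hl : 0 < l) :
    ∫ z in Ioi (0:ℝ),
        (1 - Real.exp (-l * z)) *
          (Real.exp (-r * z) * (2 * r * z + 1) / (2 * Real.sqrt Real.pi * z ^ ((3:ℝ)/2)))
      = l / Real.sqrt (l + r) := by
  have hπ : (0:ℝ) < Real.sqrt Real.pi := Real.sqrt_pos.mpr Real.pi_pos
  set s : ℝ := Real.sqrt Real.pi with hsdef
  set G : ℝ → ℝ := fun z =>
      -((1 - Real.exp (-l * z)) * Real.exp (-r * z) * z ^ (-(1:ℝ)/2)) / s with hG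
  set G' : ℝ → ℝ := fun z =>
      -((l * Real.exp (-l * z)) * Real.exp (-r * z) * z ^ (-(1:ℝ)/2)
        + (1 - Real.exp (-l * z)) * (-r * Real.exp (-r * z)) * z ^ (-(1:ℝ)/2)
        + (1 - Real.exp (-l * z)) * Real.exp (-r * z) * ((-(1:ℝ)/2) * z ^ (-(1:ℝ)/2 - 1))) / s
    with hG'
  set I : ℝ → ℝ := fun z =>
      (1 - Real.exp (-l * z)) *
        (Real.exp (-r * z) * (2 * r * z + 1) / (2 * s * z ^ ((3:ℝ)/2))) with hI
  set J : ℝ → ℝ := fun z => Real.exp (-((l + r) * z)) * z ^ (-(1:ℝ)/2) with hJ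
  -- derivative
  have hderiv : ∀ z ∈ Ioi (0:ℝ), HasDerivAt G (G' z) z := by
    intro z hz
    have hlz : HasDerivAt (fun z : ℝ => -l * z) (-l) z := by
      simpa using (hasDerivAt_id z).const_mul (-l)
    have hrz : HasDerivAt (fun z : ℝ => -r * z) (-r) z := by
      simpa using (hasDerivAt_id z).const_mul (-r)
    have e1 : HasDerivAt (fun z : ℝ => 1 - Real.exp (-l * z))
        (-(Real.exp (-l * z) * -l)) z := hlz.exp.const_sub 1
    have e2 : HasDerivAt (fun z : ℝ => Real.exp (-r * z))
        (Real.exp (-r * z) * -r) z := hrz.exp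
    have e3 : HasDerivAt (fun z : ℝ => z ^ (-(1:ℝ)/2))
        ((-(1:ℝ)/2) * z ^ (-(1:ℝ)/2 - 1)) z :=
      Real.hasDerivAt_rpow_const (Or.inl (ne_of_gt (mem_Ioi.mp hz)))
    have D := (((e1.mul e2).mul e3).neg).div_const s
    refine D.congr_deriv ?_
    simp only [G', Pi.mul_apply]
    ring
  -- key pointwise identity on Ioi 0
  have keyid : ∀ z ∈ Ioi (0:ℝ), I z = G' z + (l / s) * J z := by
    intro z hz
    have hz0 : (0:ℝ) < z := mem_Ioi.mp hz
    have hA : (0:ℝ) < z ^ ((3:ℝ)/2) := Real.rpow_pos_of_pos hz0 _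
    have h1 : z ^ (-(1:ℝ)/2) = z / z ^ ((3:ℝ)/2) := by
      rw [eq_div_iff hA.ne', ← Real.rpow_add hz0]
      norm_num
    have h2 : z ^ (-(1:ℝ)/2 - 1) = (z ^ ((3:ℝ)/2))⁻¹ := by
      rw [show (-(1:ℝ)/2 - 1) = -((3:ℝ)/2) by norm_num, Real.rpow_neg hz0.le]
    have hE : Real.exp (-((l + r) * z)) = Real.exp (-l * z) * Real.exp (-r * z) := by
      rw [← Real.exp_add]; ring_nf
    simp only [hI, hG', hJ, h1, h2, hE]
    field_simp
    ring
  -- limit at infinity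
  have htop : Tendsto G atTop (nhds 0) := by
    have hexp : ∀ c : ℝ, 0 < c → Tendsto (fun z : ℝ => Real.exp (-c * z)) atTop (nhds 0) := by
      intro c hc
      have h1 : Tendsto (fun z : ℝ => -c * z) atTop atBot :=
        Tendsto.const_mul_atTop_of_neg (neg_lt_zero.mpr hc) tendsto_id
      exact Real.tendsto_exp_atBot.comp h1
    have t1 : Tendsto (fun z : ℝ => 1 - Real.exp (-l * z)) atTop (nhds 1) := by
      simpa using tendsto_const_nhds.sub (hexp l hl)
    have t3 : Tendsto (fun z : ℝ => z ^ (-(1:ℝ)/2)) atTop (nhds 0) := by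
      rw [show (-(1:ℝ)/2 : ℝ) = -((1:ℝ)/2) by norm_num]
      exact tendsto_rpow_neg_atTop (by norm_num)
    have h := (((t1.mul (hexp r hr)).mul t3).neg).div_const s
    convert h using 2
    norm_num
  -- continuity at 0 from the right
  have hG0 : G 0 = 0 := by simp [hG]
  have hcont : ContinuousWithinAt G (Ici (0:ℝ)) 0 := by
    rw [ContinuousWithinAt, hG0]
    apply squeeze_zero_norm' (a := fun z : ℝ => l * z ^ ((1:ℝ)/2) / s)
    · filter_upwards [self_mem_nhdsWithin] with z hz
      rcases eq_or_lt_of_le (mem_Ici.mp hz) with h0 | h0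
      · simp [hG, ← h0, Real.zero_rpow (by norm_num : (1:ℝ)/2 ≠ 0)]
      · have hB0 : (0:ℝ) ≤ z ^ (-(1:ℝ)/2) := Real.rpow_nonneg h0.le _
        have hEl : Real.exp (-l * z) ≤ 1 := by
          rw [Real.exp_le_one_iff]; nlinarith
        have ha : 1 - Real.exp (-l * z) ≤ l * z := by
          nlinarith [Real.add_one_le_exp (-l * z)]
        have ha0 : 0 ≤ 1 - Real.exp (-l * z) := by linarith
        have hEr : Real.exp (-r * z) ≤ 1 := by
          rw [Real.exp_le_one_iff]; nlinarith
        have hEr0 : 0 < Real.exp (-r * z) := Real.exp_pos _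
        have hzz : z * z ^ (-(1:ℝ)/2) = z ^ ((1:ℝ)/2) := by
          nth_rewrite 1 [← Real.rpow_one z]
          rw [← Real.rpow_add h0]
          norm_num
        have key : (1 - Real.exp (-l * z)) * Real.exp (-r * z) * z ^ (-(1:ℝ)/2)
            ≤ l * z ^ ((1:ℝ)/2) := by
          rw [← hzz, ← mul_assoc]
          have h1 : (1 - Real.exp (-l * z)) * Real.exp (-r * z) ≤ l * z := by
            nlinarith
          exact mul_le_mul_of_nonneg_right h1 hB0
        have hnorm : ‖G z‖ = ((1 - Real.exp (-l * z)) * Real.exp (-r * z) * z ^ (-(1:ℝ)/2)) / s := by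
          simp only [hG, Real.norm_eq_abs, abs_div, abs_neg]
          rw [abs_of_nonneg (by positivity : (0:ℝ) ≤ (1 - Real.exp (-l * z)) * Real.exp (-r * z) * z ^ (-(1:ℝ)/2)), abs_of_nonneg hπ.le]
        rw [hnorm]
        exact div_le_div_of_nonneg_right key hπ.le
    · have c0 : ContinuousAt (fun z : ℝ => z ^ ((1:ℝ)/2)) 0 :=
        Real.continuousAt_rpow_const 0 _ (Or.inr (by norm_num))
      have h1 := ((c0.tendsto.const_mul l).div_const s)
      have h' := tendsto_nhdsWithin_of_tendsto_nhds (s := Set.Ici (0:ℝ)) h1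
      simpa [Real.zero_rpow (by norm_num : (1:ℝ)/2 ≠ 0)] using h'
  -- integrability of J
  have hJint : IntegrableOn J (Ioi 0) := gamma_half_integrable (by linarith)
  -- integrability of I
  have hIcont : ContinuousOn I (Ioi 0) := by
    have cA : Continuous (fun z : ℝ => z ^ ((3:ℝ)/2)) :=
      continuous_iff_continuousAt.mpr fun x =>
        Real.continuousAt_rpow_const x _ (Or.inr (by norm_num))
    have ce : ∀ c : ℝ, Continuous fun z : ℝ => Real.exp (c * z) :=
      fun c => Real.continuous_exp.comp (continuous_const.mul continuous_id)
    have cnum : Continuous (fun z : ℝ =>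
        (1 - Real.exp (-l * z)) * (Real.exp (-r * z) * (2 * r * z + 1))) :=
      (continuous_const.sub (ce (-l))).mul ((ce (-r)).mul
        ((continuous_const.mul continuous_id).add continuous_const))
    have : ContinuousOn (fun z : ℝ =>
        (1 - Real.exp (-l * z)) * (Real.exp (-r * z) * (2 * r * z + 1))
          / (2 * s * z ^ ((3:ℝ)/2))) (Ioi 0) := by
      apply cnum.continuousOn.div ((continuous_const.mul cA).continuousOn)
      intro z hz
      have : (0:ℝ) < z ^ ((3:ℝ)/2) := Real.rpow_pos_of_pos (mem_Ioi.mp hz) _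
      exact (mul_pos (mul_pos two_pos hπ) this).ne'
    exact this.congr (fun z _ => by simp only [hI]; ring)
  have hIint : IntegrableOn I (Ioi 0) := by
    set C : ℝ := (r + l/2) / s with hC
    have hdom : IntegrableOn (fun z : ℝ => C * (Real.exp (-(r * z)) * z ^ (-(1:ℝ)/2))) (Ioi 0) :=
      (gamma_half_integrable hr).const_mul C
    apply Integrable.mono' hdom (hIcont.aestronglyMeasurable measurableSet_Ioi)
    filter_upwards [self_mem_ae_restrict measurableSet_Ioi] with z hz
    have hz0 : (0:ℝ) < z := mem_Ioi.mp hz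
    have hA : (0:ℝ) < z ^ ((3:ℝ)/2) := Real.rpow_pos_of_pos hz0 _
    have hBA : z ^ (-(1:ℝ)/2) = z / z ^ ((3:ℝ)/2) := by
      rw [eq_div_iff hA.ne', ← Real.rpow_add hz0]
      norm_num
    have hEl : Real.exp (-l * z) ≤ 1 := by rw [Real.exp_le_one_iff]; nlinarith
    have ha : 1 - Real.exp (-l * z) ≤ l * z := by nlinarith [Real.add_one_le_exp (-l * z)]
    have ha0 : 0 ≤ 1 - Real.exp (-l * z) := by linarith
    have hEr0 : 0 < Real.exp (-r * z) := Real.exp_pos _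
    have hI0 : 0 ≤ I z := by
      simp only [hI]
      have : 0 < 2 * r * z + 1 := by nlinarith
      positivity
    rw [Real.norm_eq_abs, abs_of_nonneg hI0]
    have key : (1 - Real.exp (-l * z)) * (Real.exp (-r * z) * (2 * r * z + 1))
        ≤ (r + l/2) * (Real.exp (-r * z) * z) * 2 := by
      nlinarith [mul_le_mul_of_nonneg_right ha hEr0.le,
        mul_nonneg (mul_nonneg (Real.exp_pos (-l * z)).le hEr0.le)
          (mul_nonneg (mul_nonneg (by norm_num : (0:ℝ) ≤ 2) hr.le) hz0.le)]
    calc I z = ((1 - Real.exp (-l * z)) * (Real.exp (-r * z) * (2 * r * z + 1)))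
          / (2 * s * z ^ ((3:ℝ)/2)) := by simp only [hI]; ring
      _ ≤ ((r + l/2) * (Real.exp (-r * z) * z) * 2) / (2 * s * z ^ ((3:ℝ)/2)) := by
          exact div_le_div_of_nonneg_right key (mul_pos (mul_pos two_pos hπ) hA).le
      _ = C * (Real.exp (-(r * z)) * z ^ (-(1:ℝ)/2)) := by
          rw [hBA, hC, neg_mul]
          field_simp
  -- integrability of G'
  have hG'int : IntegrableOn G' (Ioi 0) := by
    have : IntegrableOn (fun z => I z - (l / s) * J z) (Ioi 0) :=
      hIint.sub (hJint.const_mul _)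
    exact this.congr_fun (fun z hz => by beta_reduce; rw [keyid z hz]; ring) measurableSet_Ioi
  -- FTC
  have hFTC : ∫ z in Ioi (0:ℝ), G' z = 0 := by
    rw [integral_Ioi_of_hasDerivAt_of_tendsto hcont hderiv hG'int htop, hG0, sub_zero]
  -- conclude
  have hsplit : ∫ z in Ioi (0:ℝ), I z = ∫ z in Ioi (0:ℝ), (G' z + (l / s) * J z) :=
    setIntegral_congr_fun measurableSet_Ioi (fun z hz => keyid z hz)
  have hJval : ∫ z in Ioi (0:ℝ), J z = s / Real.sqrt (l + r) := gamma_half_value (by linarith)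
  calc ∫ z in Ioi (0:ℝ),
        (1 - Real.exp (-l * z)) *
          (Real.exp (-r * z) * (2 * r * z + 1) / (2 * s * z ^ ((3:ℝ)/2)))
      = ∫ z in Ioi (0:ℝ), (G' z + (l / s) * J z) := hsplit
    _ = (∫ z in Ioi (0:ℝ), G' z) + ∫ z in Ioi (0:ℝ), (l / s) * J z :=
        integral_add hG'int (hJint.const_mul _)
    _ = (l / s) * (s / Real.sqrt (l + r)) := by
        rw [hFTC, zero_add, integral_const_mul, hJval]
    _ = l / Real.sqrt (l + r) := by
        field_simp
end

section
/- For r > 0, the double Laplace transform identity holds: for λ > 0 and x ≥ 0, ∫₀^∞ e^{-λt} [e^{-rt}(g(t,x+y) + g(t,y−x)) + ∫₀^t 2r e^{-rs} g(s,y) ds] dt = (1/2)e^{-(x+y)√(λ+r)}/√(λ+r) + (1/2)e^{-|y−x|√(λ+r)}/√(λ+r) + (r/λ) e^{-y√(λ+r)}/√(λ+r), for all y > 0, where g(t,z) = e^{-z²/(4t)}/√(4πt). -/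
open MeasureTheory Real Set

noncomputable def heatKernel (t z : ℝ) : ℝ :=
  Real.exp (-(z ^ 2) / (4 * t)) / Real.sqrt (4 * Real.pi * t)

/-!
Everything reduces to the Laplace transform of the heat kernel,
`∫₀^∞ e^{-μt} g(t, c) dt = e^{-|c|√μ} / (2√μ)`. Substituting `t = (u / √μ)²` turns it into
`e^{-|c|√μ} / √(πμ) · ∫₀^∞ e^{-(u - b/u)²} du` with `b = |c|√μ / 2`, and this Cauchy–Schlömilch
integral equals `√π / 2`: the substitution `v = u - b/u` maps `(0, ∞)` onto `ℝ` with Jacobian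
`1 + b/u²`, and the substitution `u ↦ b/u` shows that the `b/u²` part contributes as much as the
`1` part. The resetting term is handled by Fubini: the Laplace transform at `λ` of `t ↦ ∫₀^t h` is
`1/λ` times that of `h`.
-/

section Substitution

variable {E : Type*} [NormedAddCommGroup E] [NormedSpace ℝ E] {b : ℝ}

lemma image_div_Ioi_zero (hb : 0 < b) : (fun u : ℝ => b / u) '' Ioi 0 = Ioi 0 := by
  refine Subset.antisymm ?_ fun w (hw : 0 < w) => ⟨b / w, div_pos hb hw, div_div_cancel₀ hb.ne'⟩
  rintro _ ⟨u, hu : 0 < u, rfl⟩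
  exact div_pos hb hu

lemma integral_Ioi_div_sq_smul_comp_div (hb : 0 < b) (g : ℝ → E) :
    ∫ u in Ioi 0, (b / u ^ 2) • g (b / u) = ∫ u in Ioi 0, g u := by
  have hderiv : ∀ u ∈ Ioi (0 : ℝ), HasDerivWithinAt (fun u => b / u) (-(b / u ^ 2)) (Ioi 0) u :=
    fun u hu => by
      simpa [div_eq_mul_inv] using ((hasDerivAt_inv (ne_of_gt hu)).const_mul b).hasDerivWithinAt
  have hinj : InjOn (fun u : ℝ => b / u) (Ioi 0) := fun u _ v _ h =>
    inv_injective (mul_left_cancel₀ hb.ne' h)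
  have := integral_image_eq_integral_abs_deriv_smul measurableSet_Ioi hderiv hinj g
  rw [image_div_Ioi_zero hb] at this
  rw [this]
  refine setIntegral_congr_fun measurableSet_Ioi fun u (hu : 0 < u) => ?_
  rw [abs_neg, abs_of_pos (by positivity)]

lemma hasDerivAt_sub_div (b u : ℝ) (hu : u ≠ 0) :
    HasDerivAt (fun u : ℝ => u - b / u) (1 + b / u ^ 2) u := by
  simpa [div_eq_mul_inv] using (hasDerivAt_id' u).fun_sub ((hasDerivAt_inv hu).const_mul b)

lemma strictMonoOn_sub_div (hb : 0 ≤ b) : StrictMonoOn (fun u : ℝ => u - b / u) (Ioi 0) :=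
  fun u (hu : 0 < u) v _ huv => by
    have : b / v ≤ b / u := div_le_div_of_nonneg_left hb hu huv.le
    simp only
    linarith

lemma image_sub_div_Ioi_zero (hb : 0 < b) : (fun u : ℝ => u - b / u) '' Ioi 0 = univ := by
  refine eq_univ_of_forall fun v => ?_
  -- the positive root of `u ^ 2 - v * u - b`
  set s := √(v ^ 2 + 4 * b)
  have hs : s ^ 2 = v ^ 2 + 4 * b := sq_sqrt (by positivity)
  have hvs : |v| < s := by
    rw [← sqrt_sq_eq_abs]
    exact sqrt_lt_sqrt (sq_nonneg v) (by linarith)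
  have hpos : 0 < (v + s) / 2 := by linarith [neg_abs_le v]
  have hne : v + s ≠ 0 := by linarith
  refine ⟨(v + s) / 2, hpos, ?_⟩
  field_simp
  linear_combination hs

lemma integral_Ioi_add_div_sq_smul_comp_sub_div (hb : 0 < b) (g : ℝ → E) :
    ∫ u in Ioi 0, (1 + b / u ^ 2) • g (u - b / u) = ∫ v, g v := by
  have := integral_image_eq_integral_abs_deriv_smul measurableSet_Ioi
    (fun u hu => (hasDerivAt_sub_div b u (ne_of_gt hu)).hasDerivWithinAt)
    (strictMonoOn_sub_div hb.le).injOn g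
  rw [image_sub_div_Ioi_zero hb, setIntegral_univ] at this
  rw [this]
  refine setIntegral_congr_fun measurableSet_Ioi fun u (hu : 0 < u) => ?_
  rw [abs_of_pos (by positivity)]

lemma integrableOn_Ioi_add_div_sq_smul_comp_sub_div (hb : 0 < b) {g : ℝ → E}
    (hg : Integrable g) : IntegrableOn (fun u => (1 + b / u ^ 2) • g (u - b / u)) (Ioi 0) := by
  rw [← integrableOn_univ, ← image_sub_div_Ioi_zero hb,
    integrableOn_image_iff_integrableOn_abs_deriv_smul measurableSet_Ioi
      (fun u hu => (hasDerivAt_sub_div b u (ne_of_gt hu)).hasDerivWithinAt)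
      (strictMonoOn_sub_div hb.le).injOn] at hg
  refine hg.congr_fun (fun u (hu : 0 < u) => ?_) measurableSet_Ioi
  simp only [abs_of_pos (by positivity : 0 < 1 + b / u ^ 2)]

lemma integral_Ioi_mul_comp_sq_div {a : ℝ} (ha : 0 < a) (g : ℝ → E) :
    ∫ u in Ioi 0, (2 * u / a ^ 2) • g ((u / a) ^ 2) = ∫ t in Ioi 0, g t := by
  have hderiv : ∀ u ∈ Ioi (0 : ℝ),
      HasDerivWithinAt (fun u => (u / a) ^ 2) (2 * u / a ^ 2) (Ioi 0) u := fun u _ => by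
    refine (((hasDerivAt_id' u).div_const a).fun_pow 2).hasDerivWithinAt.congr_deriv ?_
    norm_num
    ring
  have hinj : InjOn (fun u => (u / a) ^ 2) (Ioi 0) := fun u (hu : 0 < u) v (hv : 0 < v) h =>
    (div_left_inj' ha.ne').1 <|
      (pow_left_inj₀ (div_pos hu ha).le (div_pos hv ha).le two_ne_zero).1 h
  have himage : (fun u => (u / a) ^ 2) '' Ioi 0 = Ioi 0 := by
    refine Subset.antisymm ?_ fun t (ht : 0 < t) => ⟨a * √t, mul_pos ha (sqrt_pos.2 ht), ?_⟩
    · rintro _ ⟨u, hu : 0 < u, rfl⟩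
      exact pow_pos (div_pos hu ha) 2
    · simp [ha.ne', sq_sqrt ht.le]
  have := integral_image_eq_integral_abs_deriv_smul measurableSet_Ioi hderiv hinj g
  rw [himage] at this
  rw [this]
  refine setIntegral_congr_fun measurableSet_Ioi fun u (hu : 0 < u) => ?_
  rw [abs_of_pos (by positivity)]

end Substitution

lemma integral_Ioi_exp_neg_sq_sub_div {b : ℝ} (hb : 0 ≤ b) :
    ∫ u in Ioi 0, exp (-(u - b / u) ^ 2) = √π / 2 := by
  rcases hb.eq_or_lt with rfl | hb
  · simpa using integral_gaussian_Ioi 1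
  set f : ℝ → ℝ := fun u => exp (-(u - b / u) ^ 2)
  have hgauss : Integrable fun v : ℝ => exp (-v ^ 2) := by
    simpa using integrable_exp_neg_mul_sq one_pos
  have hsum_int : IntegrableOn (fun u => (1 + b / u ^ 2) * f u) (Ioi 0) :=
    integrableOn_Ioi_add_div_sq_smul_comp_sub_div hb hgauss
  have hf_int : IntegrableOn f (Ioi 0) := by
    refine hsum_int.mono' (by fun_prop) (ae_restrict_of_forall_mem measurableSet_Ioi
      fun u (hu : 0 < u) => ?_)
    rw [norm_of_nonneg (exp_nonneg _)]
    exact le_mul_of_one_le_left (exp_nonneg _) (by simp; positivity)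
  have hsymm : ∫ u in Ioi 0, b / u ^ 2 * f u = ∫ u in Ioi 0, f u := by
    rw [← integral_Ioi_div_sq_smul_comp_div hb f]
    refine setIntegral_congr_fun measurableSet_Ioi fun u (hu : 0 < u) => ?_
    simp only [f, smul_eq_mul, div_div_cancel₀ hb.ne']
    rw [← neg_sub, neg_sq]
  have hsplit : ∫ u in Ioi 0, (1 + b / u ^ 2) * f u
      = (∫ u in Ioi 0, f u) + ∫ u in Ioi 0, b / u ^ 2 * f u := by
    simp_rw [add_mul, one_mul]
    refine integral_add hf_int
      ((hsum_int.sub hf_int).congr_fun (fun u _ => ?_) measurableSet_Ioi)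
    simp only [Pi.sub_apply]
    ring
  have htotal : ∫ u in Ioi 0, (1 + b / u ^ 2) * f u = √π := by
    simpa using (integral_Ioi_add_div_sq_smul_comp_sub_div hb fun v => exp (-v ^ 2)).trans
      (by simpa using integral_gaussian 1)
  linarith

lemma heatKernel_nonneg (t z : ℝ) : 0 ≤ heatKernel t z := by
  unfold heatKernel
  positivity

lemma heatKernel_le {t : ℝ} (ht : 0 ≤ t) (z : ℝ) : heatKernel t z ≤ (√(4 * π * t))⁻¹ := by
  rw [heatKernel, div_eq_mul_inv]
  refine mul_le_of_le_one_left (by positivity) (exp_le_one_iff.2 ?_)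
  rw [neg_div]
  exact neg_nonpos.2 (by positivity)

lemma integrableOn_exp_mul_heatKernel {μ : ℝ} (hμ : 0 < μ) (c : ℝ) :
    IntegrableOn (fun t => exp (-μ * t) * heatKernel t c) (Ioi 0) := by
  have hmajorant := integrableOn_rpow_mul_exp_neg_mul_rpow (s := -(1 / 2)) (p := 1)
    (by norm_num) one_pos hμ
  simp only [rpow_one] at hmajorant
  refine (hmajorant.const_mul (√(4 * π))⁻¹).mono' (by unfold heatKernel; fun_prop)
    (ae_restrict_of_forall_mem measurableSet_Ioi fun t (ht : 0 < t) => ?_)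
  rw [norm_of_nonneg (mul_nonneg (exp_nonneg _) (heatKernel_nonneg t c))]
  calc exp (-μ * t) * heatKernel t c ≤ exp (-μ * t) * (√(4 * π * t))⁻¹ := by
        gcongr
        exact heatKernel_le ht.le c
    _ = (√(4 * π))⁻¹ * (t ^ (-(1 / 2) : ℝ) * exp (-μ * t)) := by
        rw [sqrt_mul (by positivity), mul_inv, sqrt_eq_rpow t, ← rpow_neg ht.le]
        ring

lemma mul_exp_mul_heatKernel_sq_div {a u : ℝ} (ha : 0 < a) (hu : 0 < u) (c : ℝ) :
    2 * u / a ^ 2 * (exp (-a ^ 2 * (u / a) ^ 2) * heatKernel ((u / a) ^ 2) c)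
      = exp (-|c| * a) / (a * √π) * exp (-(u - |c| * a / 2 / u) ^ 2) := by
  have hsqrt : √(4 * π * (u / a) ^ 2) = 2 * √π * (u / a) := by
    rw [sqrt_mul (by positivity), sqrt_sq (by positivity), sqrt_mul (by norm_num),
      show (4 : ℝ) = 2 ^ 2 by norm_num, sqrt_sq (by norm_num)]
  -- completing the square: `u² + (|c| a / 2)² / u² = (u - (|c| a / 2) / u)² + |c| a`
  have hexp : exp (-a ^ 2 * (u / a) ^ 2) * exp (-c ^ 2 / (4 * (u / a) ^ 2))
      = exp (-|c| * a) * exp (-(u - |c| * a / 2 / u) ^ 2) := by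
    rw [← exp_add, ← exp_add, ← sq_abs c]
    congr 1
    field_simp
    ring
  rw [heatKernel, hsqrt, ← mul_div_assoc, hexp]
  field_simp

lemma integral_exp_mul_heatKernel {μ : ℝ} (hμ : 0 < μ) (c : ℝ) :
    ∫ t in Ioi 0, exp (-μ * t) * heatKernel t c = exp (-|c| * √μ) / (2 * √μ) := by
  obtain ⟨a, ha, rfl⟩ : ∃ a, 0 < a ∧ μ = a ^ 2 :=
    ⟨√μ, sqrt_pos.2 hμ, (sq_sqrt hμ.le).symm⟩
  rw [← integral_Ioi_mul_comp_sq_div ha]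
  simp only [smul_eq_mul]
  rw [setIntegral_congr_fun measurableSet_Ioi fun u (hu : 0 < u) =>
      mul_exp_mul_heatKernel_sq_div ha hu c,
    integral_const_mul, integral_Ioi_exp_neg_sq_sub_div (by positivity), sqrt_sq ha.le]
  field_simp

section LaplacePrimitive

variable {l : ℝ} (h : ℝ → ℝ)

noncomputable def laplacePrimitiveIntegrand (l : ℝ) (h : ℝ → ℝ) : ℝ × ℝ → ℝ :=
  {p : ℝ × ℝ | p.2 ≤ p.1}.indicator fun p => exp (-l * p.1) * h p.2

lemma laplacePrimitiveIntegrand_fst_slice (s : ℝ) :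
    (fun t => laplacePrimitiveIntegrand l h (t, s))
      = (Ici s).indicator fun t => exp (-l * t) * h s := by
  ext t
  simp [laplacePrimitiveIntegrand, indicator_apply]

lemma laplacePrimitiveIntegrand_snd_slice (t : ℝ) :
    (fun s => laplacePrimitiveIntegrand l h (t, s))
      = (Iic t).indicator fun s => exp (-l * t) * h s := by
  ext s
  simp [laplacePrimitiveIntegrand, indicator_apply]

lemma norm_laplacePrimitiveIntegrand (p : ℝ × ℝ) :
    ‖laplacePrimitiveIntegrand l h p‖ = laplacePrimitiveIntegrand l (fun s => |h s|) p := by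
  simp [laplacePrimitiveIntegrand, norm_indicator_eq_indicator_norm]

lemma integral_laplacePrimitiveIntegrand_fst (hl : 0 < l) {s : ℝ} (hs : 0 < s) :
    ∫ t in Ioi 0, laplacePrimitiveIntegrand l h (t, s) = exp (-l * s) * h s / l := by
  rw [laplacePrimitiveIntegrand_fst_slice, integral_indicator measurableSet_Ici,
    Measure.restrict_restrict measurableSet_Ici, inter_eq_left.2 (Ici_subset_Ioi.2 hs),
    integral_Ici_eq_integral_Ioi, integral_mul_const, integral_exp_mul_Ioi (neg_lt_zero.2 hl)]
  field_simp

lemma integral_laplacePrimitiveIntegrand_snd (t : ℝ) :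
    ∫ s in Ioi 0, laplacePrimitiveIntegrand l h (t, s) = exp (-l * t) * ∫ s in Ioc 0 t, h s := by
  rw [laplacePrimitiveIntegrand_snd_slice, integral_indicator measurableSet_Iic,
    Measure.restrict_restrict measurableSet_Iic, Iic_inter_Ioi, integral_const_mul]

variable {h}

lemma integrable_laplacePrimitiveIntegrand (hl : 0 < l)
    (hh : IntegrableOn (fun s => exp (-l * s) * h s) (Ioi 0)) :
    Integrable (laplacePrimitiveIntegrand l h)
      ((volume.restrict (Ioi 0)).prod (volume.restrict (Ioi 0))) := by
  have hh_meas : AEStronglyMeasurable h (volume.restrict (Ioi 0)) := by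
    refine ((continuous_exp.comp (continuous_const_mul l)).aestronglyMeasurable.mul
      hh.aestronglyMeasurable).congr (ae_of_all _ fun s => ?_)
    simp [← mul_assoc, ← exp_add]
  have hmeas : AEStronglyMeasurable (laplacePrimitiveIntegrand l h)
      ((volume.restrict (Ioi 0)).prod (volume.restrict (Ioi 0))) :=
    ((continuous_exp.comp (continuous_const.mul continuous_fst)).aestronglyMeasurable.mul
      hh_meas.comp_snd).indicator (measurableSet_le measurable_snd measurable_fst)
  refine (integrable_prod_iff' hmeas).2 ⟨ae_of_all _ fun s => ?_, ?_⟩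
  · rw [laplacePrimitiveIntegrand_fst_slice]
    exact ((exp_neg_integrableOn_Ioi 0 hl).mul_const (h s)).indicator measurableSet_Ici
  · refine (hh.norm.div_const l).congr (ae_restrict_of_forall_mem measurableSet_Ioi
      fun s (hs : 0 < s) => ?_)
    simp only [norm_laplacePrimitiveIntegrand]
    rw [integral_laplacePrimitiveIntegrand_fst _ hl hs, norm_mul, norm_of_nonneg (exp_nonneg _),
      norm_eq_abs]

lemma integrableOn_exp_mul_integral_Ioc (hl : 0 < l)
    (hh : IntegrableOn (fun s => exp (-l * s) * h s) (Ioi 0)) :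
    IntegrableOn (fun t => exp (-l * t) * ∫ s in Ioc 0 t, h s) (Ioi 0) :=
  (integrable_laplacePrimitiveIntegrand hl hh).integral_prod_left.congr
    (ae_of_all _ (integral_laplacePrimitiveIntegrand_snd h))

lemma integral_exp_mul_integral_Ioc (hl : 0 < l)
    (hh : IntegrableOn (fun s => exp (-l * s) * h s) (Ioi 0)) :
    ∫ t in Ioi 0, exp (-l * t) * ∫ s in Ioc 0 t, h s
      = (∫ s in Ioi 0, exp (-l * s) * h s) / l := by
  calc ∫ t in Ioi 0, exp (-l * t) * ∫ s in Ioc 0 t, h s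
      = ∫ t in Ioi 0, ∫ s in Ioi 0, laplacePrimitiveIntegrand l h (t, s) := by
        simp_rw [integral_laplacePrimitiveIntegrand_snd]
    _ = ∫ s in Ioi 0, ∫ t in Ioi 0, laplacePrimitiveIntegrand l h (t, s) :=
        integral_integral_swap (integrable_laplacePrimitiveIntegrand hl hh)
    _ = ∫ s in Ioi 0, exp (-l * s) * h s / l :=
        setIntegral_congr_fun measurableSet_Ioi fun s hs =>
          integral_laplacePrimitiveIntegrand_fst h hl hs
    _ = (∫ s in Ioi 0, exp (-l * s) * h s) / l := integral_div _ _

end LaplacePrimitive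

theorem laplace_transform_resetting_density
    (r l x : ℝ) (hr : 0 < r) (hl : 0 < l) (hx : 0 ≤ x) :
    ∀ y > (0:ℝ),
      ∫ t in Ioi (0:ℝ), Real.exp (-l * t) *
          (Real.exp (-r * t) * (heatKernel t (x + y) + heatKernel t (y - x))
            + ∫ s in Ioc (0:ℝ) t, 2 * r * Real.exp (-r * s) * heatKernel s y)
        = (1/2) * Real.exp (-(x + y) * Real.sqrt (l + r)) / Real.sqrt (l + r)
          + (1/2) * Real.exp (-|y - x| * Real.sqrt (l + r)) / Real.sqrt (l + r)
          + (r / l) * Real.exp (-y * Real.sqrt (l + r)) / Real.sqrt (l + r) := by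
  intro y hy
  have hlr : 0 < l + r := add_pos hl hr
  have hexp : ∀ t, exp (-l * t) * exp (-r * t) = exp (-(l + r) * t) := fun t => by
    rw [← exp_add]
    ring_nf
  have hreset : ∀ s, exp (-l * s) * (2 * r * exp (-r * s) * heatKernel s y)
      = 2 * r * (exp (-(l + r) * s) * heatKernel s y) := fun s => by
    rw [← hexp]
    ring
  have hreset_int :
      IntegrableOn (fun s => exp (-l * s) * (2 * r * exp (-r * s) * heatKernel s y)) (Ioi 0) := by
    simp only [hreset]
    exact (integrableOn_exp_mul_heatKernel hlr y).const_mul (2 * r)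
  have hsplit : ∀ t, exp (-l * t) * (exp (-r * t) * (heatKernel t (x + y) + heatKernel t (y - x))
        + ∫ s in Ioc 0 t, 2 * r * exp (-r * s) * heatKernel s y)
      = exp (-(l + r) * t) * heatKernel t (x + y) + exp (-(l + r) * t) * heatKernel t (y - x)
        + exp (-l * t) * ∫ s in Ioc 0 t, 2 * r * exp (-r * s) * heatKernel s y := fun t => by
    rw [← hexp]
    ring
  simp_rw [hsplit]
  rw [integral_add ((integrableOn_exp_mul_heatKernel hlr _).fun_add
      (integrableOn_exp_mul_heatKernel hlr _)) (integrableOn_exp_mul_integral_Ioc hl hreset_int),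
    integral_add (integrableOn_exp_mul_heatKernel hlr _) (integrableOn_exp_mul_heatKernel hlr _),
    integral_exp_mul_integral_Ioc hl hreset_int]
  simp_rw [hreset]
  rw [integral_const_mul, integral_exp_mul_heatKernel hlr, integral_exp_mul_heatKernel hlr,
    integral_exp_mul_heatKernel hlr, abs_of_pos hy, abs_of_nonneg (by positivity : 0 ≤ x + y)]
  field_simp
end
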